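/- Let V be a variety with constants in which every congruence on every product A × B is directly decomposable, i.e., every congruence C on A × B is of the form C₁ × C₂ = {((a,b),(a',b')) : a C₁ a', b C₂ b'} for congruences C₁ on A and C₂ on B. Then V satisfies property (P): for surjective homomorphisms presented as coequalizers q₁ : A → A' of (u,v) and q₂ : B → B' of (u',v'), the map q₁ × q₂ is a coequalizer of (u × u', v × v'). -/
import Mathlib


open FirstOrder Language Structure

universe u v w

/-- The componentwise structure on a binary product of structures. -/
instance prodStructure {L : FirstOrder.Language.{u, v}} {M N : Type*}
    [L.Structure M] [L.Structure N] : L.Structure (M × N) where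
  funMap f x := (funMap f (fun i => (x i).1), funMap f (fun i => (x i).2))
  RelMap r x := RelMap r (fun i => (x i).1) ∧ RelMap r (fun i => (x i).2)

/-- `M` satisfies the set of equations `E`. -/
def SatisfiesEqs (L : FirstOrder.Language.{u, v}) (E : Set (L.Term ℕ × L.Term ℕ))
    (M : Type w) [L.Structure M] : Prop :=
  ∀ e ∈ E, ∀ val : ℕ → M, e.1.realize val = e.2.realize val

/-- A congruence on an algebra: an equivalence relation compatible with all
operations. -/
def IsCongruence (L : FirstOrder.Language.{u, v}) (M : Type w) [L.Structure M]
    (C : M → M → Prop) : Prop :=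
  Equivalence C ∧ ∀ {k : ℕ} (f : L.Functions k) (x y : Fin k → M),
    (∀ i, C (x i) (y i)) → C (funMap f x) (funMap f y)

/-- The congruence generated by a set of pairs: the smallest congruence
containing it. -/
def ConGen (L : FirstOrder.Language.{u, v}) (M : Type w) [L.Structure M]
    (S : Set (M × M)) (p q : M) : Prop :=
  ∀ C : M → M → Prop, IsCongruence L M C → (∀ pr ∈ S, C pr.1 pr.2) → C p q

theorem conGen_isCongruence (L : FirstOrder.Language.{u, v}) (M : Type w) [L.Structure M]
    (S : Set (M × M)) : IsCongruence L M (ConGen L M S) := by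
  refine ⟨⟨?_, ?_, ?_⟩, ?_⟩
  · intro p C hC _; exact hC.1.refl p
  · intro p q h C hC hS; exact hC.1.symm (h C hC hS)
  · intro p q r h h' C hC hS; exact hC.1.trans (h C hC hS) (h' C hC hS)
  · intro k f x y h C hC hS
    exact hC.2 f x y (fun i => h i C hC hS)

theorem prod_isCongruence (L : FirstOrder.Language.{u, v}) (A B : Type w)
    [L.Structure A] [L.Structure B] {C₁ : A → A → Prop} {C₂ : B → B → Prop}
    (h₁ : IsCongruence L A C₁) (h₂ : IsCongruence L B C₂) :
    IsCongruence L (A × B) (fun p q => C₁ p.1 q.1 ∧ C₂ p.2 q.2) := by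
  refine ⟨⟨?_, ?_, ?_⟩, ?_⟩
  · intro p; exact ⟨h₁.1.refl _, h₂.1.refl _⟩
  · intro p q h; exact ⟨h₁.1.symm h.1, h₂.1.symm h.2⟩
  · intro p q r h h'; exact ⟨h₁.1.trans h.1 h'.1, h₂.1.trans h.2 h'.2⟩
  · intro k f x y h
    exact ⟨h₁.2 f _ _ (fun i => (h i).1), h₂.2 f _ _ (fun i => (h i).2)⟩

/-- a variety with constants in which congruences on binary products
are directly decomposable satisfies property (P): for coequalizer presentations
`q₁ : A ↠ A/Θ₁` of `(u,v)` and `q₂ : B ↠ B/Θ₂` of `(u',v')` (quotients by the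
generated congruences), `q₁ × q₂` is a coequalizer of `(u × u', v × v')`, i.e. the
kernel congruence `Θ₁ × Θ₂` of `q₁ × q₂` coincides with the congruence on `A × B`
generated by the pairs `((u t, u' t'), (v t, v' t'))`. -/
theorem stmt18 (L : FirstOrder.Language.{u, v}) (c : L.Constants)
    (E : Set (L.Term ℕ × L.Term ℕ))
    (hdec : ∀ (A B : Type w) [L.Structure A] [L.Structure B],
      SatisfiesEqs L E A → SatisfiesEqs L E B →
      ∀ C : A × B → A × B → Prop, IsCongruence L (A × B) C →
        ∃ (C₁ : A → A → Prop) (C₂ : B → B → Prop),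
          IsCongruence L A C₁ ∧ IsCongruence L B C₂ ∧
          ∀ (a a' : A) (b b' : B), C (a, b) (a', b') ↔ C₁ a a' ∧ C₂ b b') :
    ∀ (A B T₁ T₂ : Type w) [L.Structure A] [L.Structure B] [L.Structure T₁]
      [L.Structure T₂],
      SatisfiesEqs L E A → SatisfiesEqs L E B → SatisfiesEqs L E T₁ →
      SatisfiesEqs L E T₂ →
      ∀ (u v : T₁ →[L] A) (u' v' : T₂ →[L] B) (a a' : A) (b b' : B),
        (ConGen L A {pr | ∃ t, pr = (u t, v t)} a a' ∧
          ConGen L B {pr | ∃ t, pr = (u' t, v' t)} b b') ↔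
        ConGen L (A × B) {pr | ∃ t t', pr = ((u t, u' t'), (v t, v' t'))}
          (a, b) (a', b') := by
  intro A B T₁ T₂ _ _ _ _ hA hB _ _ u v u' v' a a' b b'
  have t₀ : T₁ := funMap (c : L.Functions 0) Fin.elim0
  have t₀' : T₂ := funMap (c : L.Functions 0) Fin.elim0
  constructor
  · rintro ⟨h1, h2⟩ C hC hS
    obtain ⟨C₁, C₂, hC₁, hC₂, hiff⟩ := hdec A B hA hB C hC
    refine (hiff a a' b b').mpr ⟨?_, ?_⟩
    · refine h1 C₁ hC₁ ?_
      rintro pr ⟨t, rfl⟩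
      exact ((hiff _ _ _ _).mp (hS _ ⟨t, t₀', rfl⟩)).1
    · refine h2 C₂ hC₂ ?_
      rintro pr ⟨t', rfl⟩
      exact ((hiff _ _ _ _).mp (hS _ ⟨t₀, t', rfl⟩)).2
  · intro h
    refine h (fun p q => ConGen L A {pr | ∃ t, pr = (u t, v t)} p.1 q.1 ∧
        ConGen L B {pr | ∃ t, pr = (u' t, v' t)} p.2 q.2)
      (prod_isCongruence L A B (conGen_isCongruence L A _) (conGen_isCongruence L B _)) ?_
    rintro pr ⟨t, t', rfl⟩
    exact ⟨fun C hC hS => hS _ ⟨t, rfl⟩, fun C hC hS => hS _ ⟨t', rfl⟩⟩
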